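/- (Erdős–Szekeres, as a corollary of the main theorem.) For every natural number k there exists a natural number N(k) such that every strict n-gon P with n ≥ N(k) has a sub-k-gon (V_{i_0}, …, V_{i_{k−1}}) whose vertex set {V_{i_0}, …, V_{i_{k−1}}} coincides with the set of extreme points of its convex hull (i.e., the k chosen points are in convex position). -/

import Mathlib

/-- The union of the edges of the polygon `P = (V_0, …, V_{n-1})`, i.e. of the closed
segments `[V_i, V_{i+1}]` (indices mod `n`, so the last edge is `[V_{n-1}, V_0]`). -/
def polygonEdges {n : ℕ} (P : Fin n → ℝ × ℝ) : Set (ℝ × ℝ) :=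
  ⋃ i : Fin n, segment ℝ (P i) (P ⟨(i.1 + 1) % n, Nat.mod_lt _ i.pos⟩)

/-- A polygon is convex iff the union of its edges is the topological boundary of the
convex hull of its vertex set. -/
def IsConvexPolygon {n : ℕ} (P : Fin n → ℝ × ℝ) : Prop :=
  polygonEdges P = frontier (convexHull ℝ (Set.range P))

/-- A polygon is strict iff any three vertices with distinct indices are non-collinear. -/
def IsStrictPolygon {n : ℕ} (P : Fin n → ℝ × ℝ) : Prop :=
  ∀ i j k : Fin n, i ≠ j → i ≠ k → j ≠ k →
    ¬ Collinear ℝ ({P i, P j, P k} : Set (ℝ × ℝ))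

/-- Orientation determinant of three points in the plane. -/
def orient (p q r : ℝ × ℝ) : ℝ :=
  (q.1 - p.1) * (r.2 - p.2) - (q.2 - p.2) * (r.1 - p.1)

lemma orient_cycle (p q r : ℝ × ℝ) : orient p q r = orient q r p := by
  simp only [orient]; ring

lemma orient_swap (p q r : ℝ × ℝ) : orient p q r = - orient p r q := by
  simp only [orient]; ring

lemma collinear_of_orient_eq_zero {p q r : ℝ × ℝ} (h : orient p q r = 0) :
    Collinear ℝ ({p, q, r} : Set (ℝ × ℝ)) := by
  by_cases hpq : p = q
  · subst hpq
    simpa using collinear_pair ℝ p r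
  rw [collinear_iff_exists_forall_eq_smul_vadd]
  refine ⟨p, q - p, ?_⟩
  rintro x (rfl | rfl | rfl)
  · exact ⟨0, by simp⟩
  · exact ⟨1, by simp⟩
  · by_cases h1 : q.1 - p.1 ≠ 0
    · refine ⟨(x.1 - p.1) / (q.1 - p.1), ?_⟩
      have h2 : x.2 - p.2 = (q.2 - p.2) * (x.1 - p.1) / (q.1 - p.1) := by
        field_simp
        simp only [orient] at h
        nlinarith [h]
      ext <;> simp [Prod.smul_fst, Prod.smul_snd]
      · field_simp
        ring
      · rw [div_mul_eq_mul_div, mul_comm]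
        linarith [h2]
    · push_neg at h1
      have h2 : q.2 - p.2 ≠ 0 := by
        intro h2
        apply hpq
        have := sub_eq_zero.mp h1
        have := sub_eq_zero.mp h2
        ext <;> simp_all
      have h3 : x.1 - p.1 = 0 := by
        simp only [orient, h1, zero_mul, zero_sub, neg_eq_zero, mul_eq_zero] at h
        tauto
      refine ⟨(x.2 - p.2) / (q.2 - p.2), ?_⟩
      ext <;> simp [Prod.smul_fst, Prod.smul_snd, h1]
      · linarith [sub_eq_zero.mp h3, sub_eq_zero.mp h1]
      · field_simp
        ring

lemma orient_combo₁ {p q r x : ℝ × ℝ} {α β γ : ℝ} (hsum : α + β + γ = 1)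
    (hx : x = α • p + β • q + γ • r) : orient p q x = γ * orient p q r := by
  have hα : α = 1 - β - γ := by linarith
  subst hα hx
  simp only [orient, Prod.fst_add, Prod.snd_add, Prod.smul_fst, Prod.smul_snd, smul_eq_mul]
  ring

lemma orient_combo₂ {p q r x : ℝ × ℝ} {α β γ : ℝ} (hsum : α + β + γ = 1)
    (hx : x = α • p + β • q + γ • r) : orient p r x = -β * orient p q r := by
  have hα : α = 1 - β - γ := by linarith
  subst hα hx
  simp only [orient, Prod.fst_add, Prod.snd_add, Prod.smul_fst, Prod.smul_snd, smul_eq_mul]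
  ring

lemma orient_combo₃ {p q r x : ℝ × ℝ} {α β γ : ℝ} (hsum : α + β + γ = 1)
    (hx : x = α • p + β • q + γ • r) : orient q r x = α * orient p q r := by
  have hα : α = 1 - β - γ := by linarith
  subst hα hx
  simp only [orient, Prod.fst_add, Prod.snd_add, Prod.smul_fst, Prod.smul_snd, smul_eq_mul]
  ring

/-- Finite Ramsey theorem for pairs, 2 colors, over any linear order. -/
lemma ramsey_pairs : ∀ m s t : ℕ, s + t ≤ m →
    ∃ R : ℕ, ∀ (α : Type) [LinearOrder α] (c : α → α → Bool) (S : Finset α), R ≤ S.card →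
      (∃ T ⊆ S, T.card = s ∧ ∀ i ∈ T, ∀ j ∈ T, i < j → c i j = true) ∨
      (∃ T ⊆ S, T.card = t ∧ ∀ i ∈ T, ∀ j ∈ T, i < j → c i j = false) := by
  intro m
  induction m with
  | zero =>
    rintro s t hst
    obtain ⟨rfl, rfl⟩ : s = 0 ∧ t = 0 := by omega
    exact ⟨0, fun α _ c S _ => Or.inl ⟨∅, Finset.empty_subset _, rfl, by simp⟩⟩
  | succ m ih =>
    rintro s t hst
    match s, t with
    | 0, t => exact ⟨0, fun α _ c S _ => Or.inl ⟨∅, Finset.empty_subset _, rfl, by simp⟩⟩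
    | s, 0 => exact ⟨0, fun α _ c S _ => Or.inr ⟨∅, Finset.empty_subset _, rfl, by simp⟩⟩
    | s+1, t+1 =>
      obtain ⟨R₁, hR₁⟩ := ih s (t+1) (by omega)
      obtain ⟨R₂, hR₂⟩ := ih (s+1) t (by omega)
      refine ⟨R₁ + R₂ + 1, ?_⟩
      intro α _ c S hS
      have hne : S.Nonempty := Finset.card_pos.mp (by omega)
      set a := S.min' hne with ha
      set S' := S.erase a with hS'
      have hcard : R₁ + R₂ ≤ S'.card := by
        rw [hS', Finset.card_erase_of_mem (S.min'_mem hne)]; omega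
      have halt : ∀ x ∈ S', a < x := fun x hx =>
        S.min'_lt_of_mem_erase_min' hne (by rwa [← hS'])
      set A := S'.filter (fun x => c a x = true) with hA
      set B := S'.filter (fun x => c a x = false) with hB
      have hAB : A.card + B.card = S'.card := by
        have h := Finset.card_filter_add_card_filter_not (s := S')
          (p := fun x => c a x = true)
        simpa [hA, hB, Bool.not_eq_true] using h
      rcases le_or_gt R₁ A.card with hc1 | hc1
      · rcases hR₁ α c A hc1 with ⟨T, hTA, hTcard, hT⟩ | ⟨T, hTA, hTcard, hT⟩
        · -- augment with a
          refine Or.inl ⟨insert a T, ?_, ?_, ?_⟩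
          · intro x hx
            rcases Finset.mem_insert.mp hx with rfl | hx
            · exact S.min'_mem hne
            · exact Finset.erase_subset _ _ (Finset.filter_subset _ _ (hTA hx))
          · rw [Finset.card_insert_of_notMem, hTcard]
            intro ha'
            exact absurd rfl (Finset.ne_of_mem_erase (Finset.filter_subset _ _ (hTA ha')))
          · intro i hi j hj hij
            rcases Finset.mem_insert.mp hi with rfl | hi
            · rcases Finset.mem_insert.mp hj with rfl | hj
              · exact absurd hij (lt_irrefl _)
              · exact (Finset.mem_filter.mp (hTA hj)).2
            · rcases Finset.mem_insert.mp hj with rfl | hj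
              · exact absurd hij (not_lt_of_gt (halt i (Finset.filter_subset _ _ (hTA hi))))
              · exact hT i hi j hj hij
        · exact Or.inr ⟨T, hTA.trans ((Finset.filter_subset _ _).trans (Finset.erase_subset _ _)),
            hTcard, hT⟩
      · have hc2 : R₂ ≤ B.card := by omega
        rcases hR₂ α c B hc2 with ⟨T, hTB, hTcard, hT⟩ | ⟨T, hTB, hTcard, hT⟩
        · exact Or.inl ⟨T, hTB.trans ((Finset.filter_subset _ _).trans (Finset.erase_subset _ _)),
            hTcard, hT⟩
        · refine Or.inr ⟨insert a T, ?_, ?_, ?_⟩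
          · intro x hx
            rcases Finset.mem_insert.mp hx with rfl | hx
            · exact S.min'_mem hne
            · exact Finset.erase_subset _ _ (Finset.filter_subset _ _ (hTB hx))
          · rw [Finset.card_insert_of_notMem, hTcard]
            intro ha'
            exact absurd rfl (Finset.ne_of_mem_erase (Finset.filter_subset _ _ (hTB ha')))
          · intro i hi j hj hij
            rcases Finset.mem_insert.mp hi with rfl | hi
            · rcases Finset.mem_insert.mp hj with rfl | hj
              · exact absurd hij (lt_irrefl _)
              · exact (Finset.mem_filter.mp (hTB hj)).2
            · rcases Finset.mem_insert.mp hj with rfl | hj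
              · exact absurd hij (not_lt_of_gt (halt i (Finset.filter_subset _ _ (hTB hi))))
              · exact hT i hi j hj hij

/-- Finite Ramsey theorem for triples, 2 colors, over any linear order. -/
lemma ramsey_triples : ∀ m s t : ℕ, s + t ≤ m →
    ∃ R : ℕ, ∀ (α : Type) [LinearOrder α] (c : α → α → α → Bool) (S : Finset α), R ≤ S.card →
      (∃ T ⊆ S, T.card = s ∧ ∀ i ∈ T, ∀ j ∈ T, ∀ k ∈ T, i < j → j < k → c i j k = true) ∨
      (∃ T ⊆ S, T.card = t ∧ ∀ i ∈ T, ∀ j ∈ T, ∀ k ∈ T, i < j → j < k → c i j k = false) := by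
  intro m
  induction m with
  | zero =>
    rintro s t hst
    obtain ⟨rfl, rfl⟩ : s = 0 ∧ t = 0 := by omega
    exact ⟨0, fun α _ c S _ => Or.inl ⟨∅, Finset.empty_subset _, rfl, by simp⟩⟩
  | succ m ih =>
    rintro s t hst
    match s, t with
    | 0, t => exact ⟨0, fun α _ c S _ => Or.inl ⟨∅, Finset.empty_subset _, rfl, by simp⟩⟩
    | s, 0 => exact ⟨0, fun α _ c S _ => Or.inr ⟨∅, Finset.empty_subset _, rfl, by simp⟩⟩
    | s+1, t+1 =>
      obtain ⟨R₁, hR₁⟩ := ih s (t+1) (by omega)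
      obtain ⟨R₂, hR₂⟩ := ih (s+1) t (by omega)
      obtain ⟨Rp, hRp⟩ := ramsey_pairs (R₁ + R₂) R₁ R₂ le_rfl
      refine ⟨Rp + 1, ?_⟩
      intro α _ c S hS
      have hne : S.Nonempty := Finset.card_pos.mp (by omega)
      set a := S.min' hne with ha
      set S' := S.erase a with hS'
      have hcard : Rp ≤ S'.card := by
        rw [hS', Finset.card_erase_of_mem (S.min'_mem hne)]; omega
      have halt : ∀ x ∈ S', a < x := fun x hx =>
        S.min'_lt_of_mem_erase_min' hne (by rwa [← hS'])
      rcases hRp α (fun x y => c a x y) S' hcard with ⟨U, hUS, hUcard, hU⟩ | ⟨U, hUS, hUcard, hU⟩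
      · rcases hR₁ α c U hUcard.ge with ⟨T, hTU, hTcard, hT⟩ | ⟨T, hTU, hTcard, hT⟩
        · refine Or.inl ⟨insert a T, ?_, ?_, ?_⟩
          · intro x hx
            rcases Finset.mem_insert.mp hx with rfl | hx
            · exact S.min'_mem hne
            · exact Finset.erase_subset _ _ (hUS (hTU hx))
          · rw [Finset.card_insert_of_notMem, hTcard]
            intro ha'
            exact absurd rfl (Finset.ne_of_mem_erase (hUS (hTU ha')))
          · intro i hi j hj k hk hij hjk
            rcases Finset.mem_insert.mp hi with rfl | hi
            · rcases Finset.mem_insert.mp hj with rfl | hj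
              · exact absurd hij (lt_irrefl _)
              rcases Finset.mem_insert.mp hk with rfl | hk
              · exact absurd hjk (not_lt_of_gt (halt j (hUS (hTU hj))))
              · exact hU j (hTU hj) k (hTU hk) hjk
            · rcases Finset.mem_insert.mp hj with rfl | hj
              · exact absurd hij (not_lt_of_gt (halt i (hUS (hTU hi))))
              rcases Finset.mem_insert.mp hk with rfl | hk
              · exact absurd (hij.trans hjk) (not_lt_of_gt (halt i (hUS (hTU hi))))
              · exact hT i hi j hj k hk hij hjk
        · exact Or.inr ⟨T, (hTU.trans hUS).trans (Finset.erase_subset _ _), hTcard, hT⟩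
      · rcases hR₂ α c U hUcard.ge with ⟨T, hTU, hTcard, hT⟩ | ⟨T, hTU, hTcard, hT⟩
        · exact Or.inl ⟨T, (hTU.trans hUS).trans (Finset.erase_subset _ _), hTcard, hT⟩
        · refine Or.inr ⟨insert a T, ?_, ?_, ?_⟩
          · intro x hx
            rcases Finset.mem_insert.mp hx with rfl | hx
            · exact S.min'_mem hne
            · exact Finset.erase_subset _ _ (hUS (hTU hx))
          · rw [Finset.card_insert_of_notMem, hTcard]
            intro ha'
            exact absurd rfl (Finset.ne_of_mem_erase (hUS (hTU ha')))
          · intro i hi j hj k hk hij hjk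
            rcases Finset.mem_insert.mp hi with rfl | hi
            · rcases Finset.mem_insert.mp hj with rfl | hj
              · exact absurd hij (lt_irrefl _)
              rcases Finset.mem_insert.mp hk with rfl | hk
              · exact absurd hjk (not_lt_of_gt (halt j (hUS (hTU hj))))
              · exact hU j (hTU hj) k (hTU hk) hjk
            · rcases Finset.mem_insert.mp hj with rfl | hj
              · exact absurd hij (not_lt_of_gt (halt i (hUS (hTU hi))))
              rcases Finset.mem_insert.mp hk with rfl | hk
              · exact absurd (hij.trans hjk) (not_lt_of_gt (halt i (hUS (hTU hi))))
              · exact hT i hi j hj k hk hij hjk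

/-- The key step: no point is in the convex hull of the others. -/
lemma not_mem_hull_diff {k : ℕ} (Q : Fin k → ℝ × ℝ) (ε : ℝ)
    (hQinj : Function.Injective Q)
    (hcol : ∀ i j l : Fin k, i ≠ j → i ≠ l → j ≠ l →
      ¬ Collinear ℝ ({Q i, Q j, Q l} : Set (ℝ × ℝ)))
    (htri : ∀ i j l : Fin k, i < j → j < l → 0 < ε * orient (Q i) (Q j) (Q l))
    (m : Fin k) : Q m ∉ convexHull ℝ (Set.range Q \ {Q m}) := by
  intro hmem
  set x := Q m with hxm
  rw [convexHull_eq_union] at hmem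
  simp only [Set.mem_iUnion, exists_prop] at hmem
  obtain ⟨t, hts, hai, hxt⟩ := hmem
  -- card bound
  have hcard : t.card ≤ 3 := by
    have h1 := hai.card_le_finrank_succ
    have h2 : Module.finrank ℝ (vectorSpan ℝ (Set.range ((↑) : ↥t → ℝ × ℝ))) ≤
        Module.finrank ℝ (ℝ × ℝ) := Submodule.finrank_le _
    have h3 : Module.finrank ℝ (ℝ × ℝ) = 2 := by
      simp [Module.finrank_prod]
    rw [Fintype.card_coe] at h1
    omega
  -- each point of t is Q of an index ≠ m
  have hidx : ∀ y ∈ t, ∃ i : Fin k, i ≠ m ∧ Q i = y := by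
    intro y hy
    obtain ⟨⟨i, rfl⟩, hne⟩ := hts hy
    exact ⟨i, fun h => hne (by simp [h, hxm]), rfl⟩
  interval_cases hc : t.card
  · -- empty
    rw [Finset.card_eq_zero] at hc
    subst hc
    simp at hxt
  · -- singleton
    rw [Finset.card_eq_one] at hc
    obtain ⟨y, rfl⟩ := hc
    simp only [Finset.coe_singleton, convexHull_singleton, Set.mem_singleton_iff] at hxt
    obtain ⟨i, him, hiy⟩ := hidx y (Finset.mem_singleton_self y)
    exact him (hQinj (by rw [hiy, ← hxt]))
  · -- two points: collinearity contradiction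
    rw [Finset.card_eq_two] at hc
    obtain ⟨y, z, hyz, rfl⟩ := hc
    rw [Finset.coe_insert, Finset.coe_singleton, convexHull_pair] at hxt
    obtain ⟨u, v, hu, hv, huv, hx⟩ := hxt
    obtain ⟨i, him, rfl⟩ := hidx y (by simp)
    obtain ⟨j, hjm, rfl⟩ := hidx z (by simp)
    have hij : i ≠ j := fun h => hyz (by rw [h])
    apply hcol i j m hij him hjm
    have : orient (Q i) (Q j) x = 0 := by
      have hx' : x = u • Q i + v • Q j + (0:ℝ) • Q i := by rw [← hx]; module
      have := orient_combo₁ (p := Q i) (q := Q j) (r := Q i) (α := u) (β := v) (γ := 0)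
        (by linarith) hx'
      simpa using this
    exact collinear_of_orient_eq_zero this
  · -- three points
    -- pull back to indices and sort them
    set T' : Finset (Fin k) := Finset.univ.filter (fun i => Q i ∈ t) with hT'
    have himage : t = T'.image Q := by
      apply Finset.Subset.antisymm
      · intro y hy
        obtain ⟨i, _, rfl⟩ := hidx y hy
        exact Finset.mem_image_of_mem Q (by simp [hT', hy])
      · intro y hy
        obtain ⟨i, hi, rfl⟩ := Finset.mem_image.mp hy
        exact (Finset.mem_filter.mp hi).2
    have hT'card : T'.card = 3 := by
      rw [himage, Finset.card_image_of_injective _ hQinj] at hc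
      omega
    set f := T'.orderIsoOfFin hT'card with hf
    set a : Fin k := (f 0).1 with ha
    set b : Fin k := (f 1).1 with hb
    set c : Fin k := (f 2).1 with hcdef
    have hab : a < b := f.strictMono (show (0 : Fin 3) < 1 by decide)
    have hbc : b < c := f.strictMono (show (1 : Fin 3) < 2 by decide)
    have haT : a ∈ T' := (f 0).2
    have hbT : b ∈ T' := (f 1).2
    have hcT : c ∈ T' := (f 2).2
    have hmT : m ∉ T' := by
      intro hmT
      have : x ∈ t := (Finset.mem_filter.mp hmT).2
      exact (hts this).2 rfl
    have hTabc : T' = {a, b, c} := by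
      apply (Finset.eq_of_subset_of_card_le ?_ ?_).symm
      · intro y hy
        simp only [Finset.mem_insert, Finset.mem_singleton] at hy
        rcases hy with rfl | rfl | rfl
        exacts [haT, hbT, hcT]
      · rw [hT'card, Finset.card_insert_of_notMem (by simp [hab.ne, (hab.trans hbc).ne]),
          Finset.card_insert_of_notMem (by simp [hbc.ne]), Finset.card_singleton]
    have htabc : (t : Set (ℝ × ℝ)) = {Q a, Q b, Q c} := by
      rw [himage, hTabc]
      simp
    rw [htabc] at hxt
    -- extract convex combination
    rw [show ({Q a, Q b, Q c} : Set (ℝ × ℝ)) = insert (Q a) {Q b, Q c} from rfl,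
      convexHull_insert ⟨Q b, by simp⟩, mem_convexJoin] at hxt
    obtain ⟨y, hy, z, hz, hxseg⟩ := hxt
    rw [Set.mem_singleton_iff] at hy
    subst hy
    rw [convexHull_pair] at hz
    obtain ⟨v, w, hv, hw, hvw, hz⟩ := hz
    obtain ⟨p', q', hp', hq', hpq', hxeq⟩ := hxseg
    have hcombo : x = p' • Q a + (q' * v) • Q b + (q' * w) • Q c := by
      rw [← hxeq, ← hz]
      simp only [smul_add, smul_smul]
      ring_nf
      try module
    have hsum : p' + q' * v + q' * w = 1 := by nlinarith
    have hβ : 0 ≤ q' * v := mul_nonneg hq' hv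
    have hγ : 0 ≤ q' * w := mul_nonneg hq' hw
    have hD : 0 < ε * orient (Q a) (Q b) (Q c) := htri a b c hab hbc
    have hma : m ≠ a := fun h => hmT (h ▸ haT)
    have hmb : m ≠ b := fun h => hmT (h ▸ hbT)
    have hmc : m ≠ c := fun h => hmT (h ▸ hcT)
    -- case analysis on position of m
    rcases lt_trichotomy m a with hlt | heq | hgt
    · -- m < a : use triple (m, a, c)
      have h1 := htri m a c hlt (hab.trans hbc)
      have h2 : orient (Q m) (Q a) (Q c) = orient (Q a) (Q c) x := by
        rw [orient_cycle]
      rw [h2, orient_combo₂ hsum hcombo] at h1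
      nlinarith
    · exact hma heq
    rcases lt_trichotomy m b with hlt | heq | hgt2
    · -- a < m < b : use triple (a, m, b)
      have h1 := htri a m b hgt hlt
      have h2 : orient (Q a) (Q m) (Q b) = - orient (Q a) (Q b) x := by
        rw [orient_swap]
      rw [h2, orient_combo₁ hsum hcombo] at h1
      nlinarith
    · exact hmb heq
    rcases lt_trichotomy m c with hlt | heq | hgt3
    · -- b < m < c : use triple (b, m, c)
      have h1 := htri b m c hgt2 hlt
      have h2 : orient (Q b) (Q m) (Q c) = - orient (Q b) (Q c) x := by
        rw [orient_swap]
      rw [h2, orient_combo₃ hsum hcombo] at h1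
      nlinarith
    · exact hmc heq
    · -- c < m : use triple (a, c, m)
      have h1 := htri a c m (hab.trans hbc) hgt3
      rw [show orient (Q a) (Q c) (Q m) = orient (Q a) (Q c) x from rfl,
        orient_combo₂ hsum hcombo] at h1
      nlinarith

/-- If a point of `A` is not in the convex hull of the rest, it is an extreme point of the
convex hull of `A`. -/
lemma mem_extremePoints_of_not_mem_hull_diff {A : Set (ℝ × ℝ)} {x : ℝ × ℝ} (hxA : x ∈ A)
    (hnot : x ∉ convexHull ℝ (A \ {x})) :
    x ∈ Set.extremePoints ℝ (convexHull ℝ A) := by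
  by_cases hempty : (A \ {x}) = ∅
  · have hA : A = {x} := by
      apply Set.Subset.antisymm
      · intro y hy
        by_contra hne
        exact Set.eq_empty_iff_forall_notMem.mp hempty y ⟨hy, hne⟩
      · intro y hy
        rw [Set.mem_singleton_iff] at hy
        rwa [hy]
    rw [hA, convexHull_singleton]
    simp [extremePoints_singleton]
  have hne : (A \ {x}).Nonempty := Set.nonempty_iff_ne_empty.mpr hempty
  set C := convexHull ℝ (A \ {x}) with hC
  have hCconv : Convex ℝ C := convex_convexHull _ _
  have hhull : convexHull ℝ A = convexJoin ℝ {x} C := by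
    rw [show A = insert x (A \ {x}) by
      rw [Set.insert_diff_singleton, Set.insert_eq_of_mem hxA]]
    exact convexHull_insert hne
  rw [mem_extremePoints_iff_forall_segment]
  refine ⟨subset_convexHull ℝ _ hxA, ?_⟩
  intro y hy z hz hseg
  rw [hhull, mem_convexJoin] at hy hz
  obtain ⟨x', hx', cy, hcy, hyseg⟩ := hy
  obtain ⟨x'', hx'', cz, hcz, hzseg⟩ := hz
  rw [Set.mem_singleton_iff] at hx' hx''
  rw [hx'] at hyseg
  rw [hx''] at hzseg
  obtain ⟨s1, s2, hs1, hs2, hs, hy⟩ := hyseg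
  obtain ⟨t1, t2, ht1, ht2, ht, hz⟩ := hzseg
  obtain ⟨u1, u2, hu1, hu2, hu, hx⟩ := hseg
  -- the key algebraic identity
  have E : u1 • (s1 • x + s2 • cy) + u2 • (t1 • x + t2 • cz) = x := by
    rw [← hy, ← hz] at hx; exact hx
  have E1 : u1 * (s1 * x.1 + s2 * cy.1) + u2 * (t1 * x.1 + t2 * cz.1) = x.1 := by
    have := congrArg Prod.fst E
    simp at this
    linarith
  have E2 : u1 * (s1 * x.2 + s2 * cy.2) + u2 * (t1 * x.2 + t2 * cz.2) = x.2 := by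
    have := congrArg Prod.snd E
    simp at this
    linarith
  have key : (u1 * s2 + u2 * t2) • x = (u1 * s2) • cy + (u2 * t2) • cz := by
    ext
    · simp only [Prod.smul_fst, Prod.fst_add, smul_eq_mul]
      linear_combination -E1 + u1 * x.1 * hs + u2 * x.1 * ht + x.1 * hu
    · simp only [Prod.smul_snd, Prod.snd_add, smul_eq_mul]
      linear_combination -E2 + u1 * x.2 * hs + u2 * x.2 * ht + x.2 * hu
  set w := u1 * s2 + u2 * t2 with hw
  rcases eq_or_lt_of_le (show (0:ℝ) ≤ w from by positivity) with hw0 | hwpos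
  · -- w = 0
    have h1 : u1 * s2 = 0 ∧ u2 * t2 = 0 := by
      constructor <;> nlinarith [mul_nonneg hu1 hs2, mul_nonneg hu2 ht2]
    by_cases hu1z : u1 = 0
    · right
      have hu2' : u2 = 1 := by linarith
      rw [← hx, hu1z, hu2', zero_smul, one_smul, zero_add]
    · left
      have hs2z : s2 = 0 := by
        rcases mul_eq_zero.mp h1.1 with h | h
        · exact absurd h hu1z
        · exact h
      have hs1' : s1 = 1 := by linarith
      rw [← hy, hs2z, hs1', zero_smul, one_smul, add_zero]
  · -- w > 0 : x is in C, contradiction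
    exfalso
    apply hnot
    have hxC : x = (w⁻¹ * (u1 * s2)) • cy + (w⁻¹ * (u2 * t2)) • cz := by
      have h0 : x = w⁻¹ • (w • x) := by
        rw [smul_smul, inv_mul_cancel₀ hwpos.ne', one_smul]
      rw [h0, key, smul_add, smul_smul, smul_smul]
    have : x ∈ segment ℝ cy cz := by
      refine ⟨w⁻¹ * (u1 * s2), w⁻¹ * (u2 * t2), by positivity, by positivity, ?_, hxC.symm⟩
      field_simp
      exact hw.symm
    exact hCconv.segment_subset hcy hcz this

/-- Erdős–Szekeres: for every `k` there is `N k` such that every strict `n`-gon with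
`n ≥ N k` has a sub-`k`-gon whose vertex set coincides with the set of extreme points
of its convex hull, i.e. the chosen `k` points are in convex position. -/
theorem erdos_szekeres :
    ∀ k : ℕ, ∃ N : ℕ, ∀ n : ℕ, N ≤ n → ∀ P : Fin n → ℝ × ℝ, IsStrictPolygon P →
      ∃ e : Fin k → Fin n, StrictMono e ∧
        Set.range (P ∘ e) =
          Set.extremePoints ℝ (convexHull ℝ (Set.range (P ∘ e))) := by
  intro k
  obtain ⟨R3, hR3⟩ := ramsey_triples (k + k) k k le_rfl
  refine ⟨max 3 R3, ?_⟩
  intro n hn P hP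
  have hn3 : 3 ≤ n := le_trans (le_max_left _ _) hn
  have hnR : R3 ≤ n := le_trans (le_max_right _ _) hn
  -- apply Ramsey to the orientation coloring
  have hcardS : R3 ≤ (Finset.univ : Finset (Fin n)).card := by
    rwa [Finset.card_univ, Fintype.card_fin]
  set c : Fin n → Fin n → Fin n → Bool :=
    fun i j l => decide (0 < orient (P i) (P j) (P l)) with hc
  have horient_ne : ∀ i j l : Fin n, i ≠ j → i ≠ l → j ≠ l →
      orient (P i) (P j) (P l) ≠ 0 := by
    intro i j l hij hil hjl h0
    exact hP i j l hij hil hjl (collinear_of_orient_eq_zero h0)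
  have key : ∃ T : Finset (Fin n), T.card = k ∧ ∃ ε : ℝ,
      ∀ i ∈ T, ∀ j ∈ T, ∀ l ∈ T, i < j → j < l → 0 < ε * orient (P i) (P j) (P l) := by
    rcases hR3 (Fin n) c Finset.univ hcardS with ⟨T, _, hTcard, hT⟩ | ⟨T, _, hTcard, hT⟩
    · refine ⟨T, hTcard, 1, fun i hi j hj l hl hij hjl => ?_⟩
      have := hT i hi j hj l hl hij hjl
      rw [hc] at this
      simp only [decide_eq_true_eq] at this
      linarith
    · refine ⟨T, hTcard, -1, fun i hi j hj l hl hij hjl => ?_⟩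
      have := hT i hi j hj l hl hij hjl
      rw [hc] at this
      simp only [decide_eq_false_iff_not, not_lt] at this
      have hne := horient_ne i j l (ne_of_lt hij) (ne_of_lt (hij.trans hjl)) (ne_of_lt hjl)
      have : orient (P i) (P j) (P l) < 0 := lt_of_le_of_ne this hne
      linarith
  obtain ⟨T, hTcard, ε, hTorient⟩ := key
  set f := T.orderIsoOfFin hTcard with hf
  set e : Fin k → Fin n := fun i => (f i).1 with he
  have hemem : ∀ i, e i ∈ T := fun i => (f i).2
  have hemono : StrictMono e := fun i j hij => f.strictMono hij
  refine ⟨e, hemono, ?_⟩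
  set Q : Fin k → ℝ × ℝ := P ∘ e with hQ
  -- injectivity of P on distinct indices
  have hPinj : ∀ i j : Fin n, i ≠ j → P i ≠ P j := by
    intro i j hij hPij
    have hcard2 : 0 < (Finset.univ \ {i, j} : Finset (Fin n)).card := by
      have h1 : ({i, j} : Finset (Fin n)).card ≤ 2 :=
        le_trans (Finset.card_insert_le _ _) (by simp)
      have h2 := Finset.card_sdiff_add_card_eq_card
        (Finset.subset_univ ({i, j} : Finset (Fin n)))
      rw [Finset.card_univ, Fintype.card_fin] at h2
      omega
    obtain ⟨l, hl⟩ := Finset.card_pos.mp hcard2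
    rw [Finset.mem_sdiff, Finset.mem_insert, Finset.mem_singleton] at hl
    push_neg at hl
    apply hP i j l hij (Ne.symm hl.2.1) (Ne.symm hl.2.2)
    rw [hPij]
    simpa using collinear_pair ℝ (P j) (P l)
  have hQinj : Function.Injective Q := by
    intro i j hij
    by_contra hne
    exact hPinj (e i) (e j) (fun h => hne (hemono.injective h)) hij
  have hcol : ∀ i j l : Fin k, i ≠ j → i ≠ l → j ≠ l →
      ¬ Collinear ℝ ({Q i, Q j, Q l} : Set (ℝ × ℝ)) := by
    intro i j l hij hil hjl
    exact hP (e i) (e j) (e l) (fun h => hij (hemono.injective h))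
      (fun h => hil (hemono.injective h)) (fun h => hjl (hemono.injective h))
  have htri : ∀ i j l : Fin k, i < j → j < l → 0 < ε * orient (Q i) (Q j) (Q l) := by
    intro i j l hij hjl
    exact hTorient (e i) (hemem i) (e j) (hemem j) (e l) (hemem l)
      (hemono hij) (hemono hjl)
  apply Set.Subset.antisymm
  · rintro x ⟨m, rfl⟩
    exact mem_extremePoints_of_not_mem_hull_diff ⟨m, rfl⟩
      (not_mem_hull_diff Q ε hQinj hcol htri m)
  · exact extremePoints_convexHull_subset
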